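/- arXiv:2505.22500 — 2 statements merged into one kernel-verified Lean document; each statement's English description precedes it below -/
import Mathlib

section
/- The deformed bivariate q-Appell polynomials satisfy P_{n,q}^{(α)}(x,y;u) = ∑_{k=0}^n [n choose k]_q P_{k,q}^{(α)}(y;u) x^{n-k}, where P_{k,q}^{(α)}(y;u) = ∑_{j=0}^k [k choose j]_q u^{C(k-j,2)} a_j^{(α)} y^{k-j}. -/
open Finset

def qNum {K : Type*} [Field K] (q : K) (n : ℕ) : K := ∑ i ∈ Finset.range n, q ^ i

def qFact {K : Type*} [Field K] (q : K) : ℕ → K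
  | 0 => 1
  | n + 1 => qFact q n * qNum q (n + 1)

def qBinom {K : Type*} [Field K] (q : K) (n k : ℕ) : K :=
  qFact q n / (qFact q k * qFact q (n - k))

lemma qFact_ne_zero {K : Type*} [Field K] {q : K}
    (hq : ∀ n : ℕ, 0 < n → qNum q n ≠ 0) : ∀ m : ℕ, qFact q m ≠ 0 := by
  intro m
  induction m with
  | zero => simp [qFact]
  | succ m ih => exact mul_ne_zero ih (hq (m + 1) (Nat.succ_pos m))

lemma qBinom_key {K : Type*} [Field K] {q : K}
    (hq : ∀ n : ℕ, 0 < n → qNum q n ≠ 0) {n k j : ℕ} (hj : j ≤ k) (hk : k ≤ n) :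
    qBinom q n k * qBinom q k j = qBinom q n (n - k + j) * qBinom q (n - k + j) j := by
  have h1 : n - k + j - j = n - k := by omega
  have h2 : n - (n - k + j) = k - j := by omega
  unfold qBinom
  rw [h1, h2]
  have hF := qFact_ne_zero hq
  rw [div_mul_div_comm, div_mul_div_comm, div_eq_div_iff
    (by exact mul_ne_zero (mul_ne_zero (hF k) (hF (n-k))) (mul_ne_zero (hF j) (hF (k-j))))
    (by exact mul_ne_zero (mul_ne_zero (hF (n-k+j)) (hF (k-j))) (mul_ne_zero (hF j) (hF (n-k))))]
  ring

/-- P_n(x,y;u) = ∑_{k=0}^n [n,k]_q P_k(y;u) x^{n-k}. -/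
theorem deformed_bivariate_qAppell_swap {K : Type*} [Field K] (q u x y : K)
    (hq : ∀ n : ℕ, 0 < n → qNum q n ≠ 0) (a : ℕ → K) (n : ℕ) :
    (∑ k ∈ Finset.range (n + 1), qBinom q n k * u ^ ((n - k).choose 2) *
        (∑ j ∈ Finset.range (k + 1), qBinom q k j * a j * x ^ (k - j)) * y ^ (n - k)) =
      ∑ k ∈ Finset.range (n + 1), qBinom q n k *
        (∑ j ∈ Finset.range (k + 1),
          qBinom q k j * u ^ ((k - j).choose 2) * a j * y ^ (k - j)) * x ^ (n - k) := by
  have hL : ∀ k, qBinom q n k * u ^ ((n - k).choose 2) *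
      (∑ j ∈ Finset.range (k + 1), qBinom q k j * a j * x ^ (k - j)) * y ^ (n - k)
      = ∑ j ∈ Finset.range (k + 1),
        qBinom q n k * qBinom q k j * u ^ ((n - k).choose 2) * a j * x ^ (k - j) * y ^ (n - k) := by
    intro k
    rw [Finset.mul_sum, Finset.sum_mul]
    exact Finset.sum_congr rfl fun j _ => by ring
  have hR : ∀ k, qBinom q n k *
      (∑ j ∈ Finset.range (k + 1), qBinom q k j * u ^ ((k - j).choose 2) * a j * y ^ (k - j)) *
      x ^ (n - k)
      = ∑ j ∈ Finset.range (k + 1),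
        qBinom q n k * qBinom q k j * u ^ ((k - j).choose 2) * a j * y ^ (k - j) * x ^ (n - k) := by
    intro k
    rw [Finset.mul_sum, Finset.sum_mul]
    exact Finset.sum_congr rfl fun j _ => by ring
  simp only [hL, hR]
  rw [Finset.sum_sigma', Finset.sum_sigma']
  refine Finset.sum_nbij' (fun p => ⟨n - p.1 + p.2, p.2⟩) (fun p => ⟨n - p.1 + p.2, p.2⟩)
    ?_ ?_ ?_ ?_ ?_
  · rintro ⟨k, j⟩ hp
    simp only [Finset.mem_sigma, Finset.mem_range] at hp ⊢
    omega
  · rintro ⟨k, j⟩ hp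
    simp only [Finset.mem_sigma, Finset.mem_range] at hp ⊢
    omega
  · rintro ⟨k, j⟩ hp
    simp only [Finset.mem_sigma, Finset.mem_range] at hp
    simp only [Sigma.mk.inj_iff]
    constructor
    · omega
    · rfl
  · rintro ⟨k, j⟩ hp
    simp only [Finset.mem_sigma, Finset.mem_range] at hp
    simp only [Sigma.mk.inj_iff]
    constructor
    · omega
    · rfl
  · rintro ⟨k, j⟩ hp
    simp only [Finset.mem_sigma, Finset.mem_range] at hp
    have hj : j ≤ k := by omega
    have hk : k ≤ n := by omega
    have h1 : n - k + j - j = n - k := by omega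
    have h2 : n - (n - k + j) = k - j := by omega
    simp only [h1, h2]
    rw [qBinom_key hq hj hk]
    ring
end

section
/- The convolution product on u-deformed q-Appell sets is commutative: if f_n(x) = ∑_k [n choose k]_q u^{C(n-k,2)} a_k x^{n-k} and g_n(x) = ∑_k [n choose k]_q u^{C(n-k,2)} b_k x^{n-k}, then ∑_{k=0}^n [n choose k]_q a_{n-k} g_k(x) = ∑_{k=0}^n [n choose k]_q b_{n-k} f_k(x) for all n. -/
open Finset

/-- The convolution product on u-deformed q-Appell sets is commutative. -/
theorem qAppell_convolution_comm {K : Type*} [Field K] (q u : K)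
    (hq : ∀ n : ℕ, 0 < n → qNum q n ≠ 0)
    (a b : ℕ → K) :
    ∀ (n : ℕ) (x : K),
      (∑ k ∈ Finset.range (n + 1), qBinom q n k * a (n - k) *
          (∑ j ∈ Finset.range (k + 1),
            qBinom q k j * u ^ ((k - j).choose 2) * b j * x ^ (k - j))) =
        ∑ k ∈ Finset.range (n + 1), qBinom q n k * b (n - k) *
          (∑ j ∈ Finset.range (k + 1),
            qBinom q k j * u ^ ((k - j).choose 2) * a j * x ^ (k - j)) := by
  have hfact : ∀ m, qFact q m ≠ 0 := by
    intro m
    induction m with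
    | zero => simp [qFact]
    | succ p ih => exact mul_ne_zero ih (hq (p + 1) p.succ_pos)
  have key : ∀ (n k j : ℕ), j ≤ k → k ≤ n →
      qBinom q n k * qBinom q k j = qBinom q n (n - j) * qBinom q (n - j) (n - k) := by
    intro n k j hjk hkn
    unfold qBinom
    rw [Nat.sub_sub_self (hjk.trans hkn), show n - j - (n - k) = k - j by omega]
    field_simp [hfact n, hfact k, hfact j, hfact (n - k), hfact (k - j), hfact (n - j)]
  intro n x
  simp_rw [Finset.mul_sum, Finset.sum_sigma']
  refine Finset.sum_nbij' (fun p => ⟨n - p.2, n - p.1⟩) (fun p => ⟨n - p.2, n - p.1⟩)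
    ?_ ?_ ?_ ?_ ?_
  · rintro ⟨k, j⟩ hp
    simp only [Finset.mem_sigma, Finset.mem_range] at hp ⊢
    omega
  · rintro ⟨k, j⟩ hp
    simp only [Finset.mem_sigma, Finset.mem_range] at hp ⊢
    omega
  · rintro ⟨k, j⟩ hp
    simp only [Finset.mem_sigma, Finset.mem_range] at hp
    have h1 : n - (n - k) = k := by omega
    have h2 : n - (n - j) = j := by omega
    simp [h1, h2]
  · rintro ⟨k, j⟩ hp
    simp only [Finset.mem_sigma, Finset.mem_range] at hp
    have h1 : n - (n - k) = k := by omega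
    have h2 : n - (n - j) = j := by omega
    simp [h1, h2]
  · rintro ⟨k, j⟩ hp
    simp only [Finset.mem_sigma, Finset.mem_range] at hp
    obtain ⟨hk, hj⟩ := hp
    have hjk : j ≤ k := by omega
    have hkn : k ≤ n := by omega
    simp only
    rw [show n - (n - j) = j by omega, show n - j - (n - k) = k - j by omega]
    linear_combination (a (n - k) * b j * u ^ ((k - j).choose 2) * x ^ (k - j)) *
      key n k j hjk hkn
end
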